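/- arXiv:math/0304373 — 2 statements merged into one kernel-verified Lean document; each statement's English description precedes it below -/
import Mathlib

section
/- If τ ≥ 0, ξ is an ℝ^d-valued random vector with L(ξ) ∈ A_d(τ), y ∈ ℝ^m, and A : ℝ^d → ℝ^m is a linear operator with operator norm ‖A‖, then L(Aξ + y) ∈ A_m(‖A‖ τ). -/
open MeasureTheory

noncomputable section

/-- Embedding of a real vector into the complex Euclidean space. -/
def toC {d : ℕ} (u : EuclideanSpace ℝ (Fin d)) : EuclideanSpace ℂ (Fin d) :=
  WithLp.toLp 2 (fun i => (u i : ℂ))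

/-- Directional derivative of a function `φ : ℂ^d → ℂ` in direction `u`. -/
def dirDeriv {d : ℕ} (φ : EuclideanSpace ℂ (Fin d) → ℂ)
    (u : EuclideanSpace ℂ (Fin d)) : EuclideanSpace ℂ (Fin d) → ℂ :=
  fun z => fderiv ℂ φ z u

/-- The quadratic form of the covariance operator of `F`:
`⟨D v, v⟩ = ∫ (⟨x,v⟩ - E⟨x,v⟩)² dF(x)`. -/
def covQuad {d : ℕ} (F : Measure (EuclideanSpace ℝ (Fin d)))
    (v : EuclideanSpace ℝ (Fin d)) : ℝ :=
  ∫ x, (inner ℝ x v - ∫ y, (inner ℝ y v : ℝ) ∂F) ^ 2 ∂F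

/-- The class `A_d(τ)` of Zaitsev: distributions `F` whose cumulant generating
function `φ` is defined and analytic on `‖z‖τ < 1` and satisfies
`|d_u d_v² φ(z)| ≤ ‖u‖ τ ⟨D v, v⟩` there, where `D = cov F`. -/
def MemA (d : ℕ) (τ : ℝ) (F : Measure (EuclideanSpace ℝ (Fin d))) : Prop :=
  ∃ φ : EuclideanSpace ℂ (Fin d) → ℂ,
    φ 0 = 0 ∧
    (∀ z : EuclideanSpace ℂ (Fin d), ‖z‖ * τ < 1 → AnalyticAt ℂ φ z) ∧
    (∀ z : EuclideanSpace ℂ (Fin d), ‖z‖ * τ < 1 →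
      Complex.exp (φ z) = ∫ x, Complex.exp (∑ i, z i * (x i : ℂ)) ∂F) ∧
    (∀ (u v : EuclideanSpace ℝ (Fin d)) (z : EuclideanSpace ℂ (Fin d)),
      ‖z‖ * τ < 1 →
      ‖dirDeriv (dirDeriv (dirDeriv φ (toC v)) (toC v)) (toC u) z‖
        ≤ ‖u‖ * τ * covQuad F v)

/-! ### Auxiliary lemmas -/

lemma eucl_sum_single {n : ℕ} (v : EuclideanSpace ℝ (Fin n)) :
    ∑ i, v i • EuclideanSpace.single i (1:ℝ) = v := by
  ext j
  have : (∑ i, v i • EuclideanSpace.single i (1:ℝ)) j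
      = EuclideanSpace.proj (𝕜 := ℝ) j (∑ i, v i • EuclideanSpace.single i (1:ℝ)) := rfl
  rw [this, map_sum]
  simp [EuclideanSpace.single_apply]

lemma clm_apply_eq_sum {n d : ℕ} (B : EuclideanSpace ℝ (Fin n) →L[ℝ] EuclideanSpace ℝ (Fin d))
    (v : EuclideanSpace ℝ (Fin n)) (j : Fin d) :
    B v j = ∑ i, v i * B (EuclideanSpace.single i 1) j := by
  conv_lhs => rw [← eucl_sum_single v]
  have : B (∑ i, v i • EuclideanSpace.single i (1:ℝ)) j
      = EuclideanSpace.proj (𝕜 := ℝ) j (B (∑ i, v i • EuclideanSpace.single i (1:ℝ))) := rfl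
  rw [this, map_sum, map_sum]
  simp [smul_eq_mul]

lemma eucl_norm_sq_r {n : ℕ} (x : EuclideanSpace ℝ (Fin n)) : ‖x‖ ^ 2 = ∑ i, (x i) ^ 2 := by
  rw [EuclideanSpace.norm_eq, Real.sq_sqrt (by positivity)]
  simp [sq_abs]

lemma eucl_norm_sq_c {n : ℕ} (z : EuclideanSpace ℂ (Fin n)) :
    ‖z‖ ^ 2 = ∑ i, ((z i).re ^ 2 + (z i).im ^ 2) := by
  rw [EuclideanSpace.norm_eq, Real.sq_sqrt (by positivity)]
  congr 1
  ext i
  rw [Complex.sq_norm, Complex.normSq_apply]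
  ring

/-- Complexification of the adjoint of `A`. -/
def Bc {d m : ℕ} (A : EuclideanSpace ℝ (Fin d) →L[ℝ] EuclideanSpace ℝ (Fin m)) :
    EuclideanSpace ℂ (Fin m) →L[ℂ] EuclideanSpace ℂ (Fin d) :=
  LinearMap.toContinuousLinearMap
  { toFun := fun z => (WithLp.toLp 2 (fun j => ∑ i, z i *
      ((ContinuousLinearMap.adjoint A (EuclideanSpace.single i (1:ℝ))) j : ℂ)) :
      EuclideanSpace ℂ (Fin d))
    map_add' := by
      intro z w
      ext j
      show (∑ i, (z + w) i * _) = (∑ i, z i * _) + ∑ i, w i * _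
      rw [← Finset.sum_add_distrib]
      refine Finset.sum_congr rfl fun i _ => ?_
      show (z i + w i) * _ = _
      ring
    map_smul' := by
      intro c z
      ext j
      show (∑ i, (c • z) i * _) = c * ∑ i, z i * _
      rw [Finset.mul_sum]
      refine Finset.sum_congr rfl fun i _ => ?_
      show (c * z i) * _ = _
      ring }

lemma Bc_apply {d m : ℕ} (A : EuclideanSpace ℝ (Fin d) →L[ℝ] EuclideanSpace ℝ (Fin m))
    (z : EuclideanSpace ℂ (Fin m)) (j : Fin d) :
    Bc A z j = ∑ i, z i *
      ((ContinuousLinearMap.adjoint A (EuclideanSpace.single i (1:ℝ))) j : ℂ) := rfl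

lemma Bc_toC {d m : ℕ} (A : EuclideanSpace ℝ (Fin d) →L[ℝ] EuclideanSpace ℝ (Fin m))
    (v : EuclideanSpace ℝ (Fin m)) :
    Bc A (toC v) = toC (ContinuousLinearMap.adjoint A v) := by
  ext j
  rw [Bc_apply]
  show _ = ((ContinuousLinearMap.adjoint A v) j : ℂ)
  rw [clm_apply_eq_sum (ContinuousLinearMap.adjoint A) v j]
  push_cast
  rfl

/-- `∑_j (A† eᵢ)_j x_j = (A x)_i`. -/
lemma adj_single_sum {d m : ℕ} (A : EuclideanSpace ℝ (Fin d) →L[ℝ] EuclideanSpace ℝ (Fin m))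
    (x : EuclideanSpace ℝ (Fin d)) (i : Fin m) :
    ∑ j, (ContinuousLinearMap.adjoint A (EuclideanSpace.single i (1:ℝ))) j * x j
      = A x i := by
  have h := ContinuousLinearMap.adjoint_inner_left (𝕜 := ℝ) A x (EuclideanSpace.single i (1:ℝ))
  rw [EuclideanSpace.inner_single_left] at h
  simp [PiLp.inner_apply, RCLike.inner_apply] at h
  rw [← h]
  exact Finset.sum_congr rfl fun j _ => mul_comm _ _

lemma Bc_exponent {d m : ℕ} (A : EuclideanSpace ℝ (Fin d) →L[ℝ] EuclideanSpace ℝ (Fin m))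
    (z : EuclideanSpace ℂ (Fin m)) (x : EuclideanSpace ℝ (Fin d)) :
    ∑ j, Bc A z j * (x j : ℂ) = ∑ i, z i * ((A x) i : ℂ) := by
  simp only [Bc_apply, Finset.sum_mul]
  rw [Finset.sum_comm]
  refine Finset.sum_congr rfl fun i _ => ?_
  rw [← adj_single_sum A x i]
  push_cast
  rw [Finset.mul_sum]
  refine Finset.sum_congr rfl fun j _ => ?_
  ring

lemma Bc_norm_le {d m : ℕ} (A : EuclideanSpace ℝ (Fin d) →L[ℝ] EuclideanSpace ℝ (Fin m))
    (z : EuclideanSpace ℂ (Fin m)) : ‖Bc A z‖ ≤ ‖A‖ * ‖z‖ := by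
  set A' := ContinuousLinearMap.adjoint A with hA'
  have hnA' : ‖A'‖ = ‖A‖ := by
    rw [hA']
    exact LinearIsometryEquiv.norm_map ContinuousLinearMap.adjoint A
  set zr : EuclideanSpace ℝ (Fin m) := WithLp.toLp 2 (fun i => (z i).re) with hzr
  set zi : EuclideanSpace ℝ (Fin m) := WithLp.toLp 2 (fun i => (z i).im) with hzi
  have hre : ∀ j, (Bc A z j).re = A' zr j := by
    intro j
    rw [Bc_apply, Complex.re_sum, clm_apply_eq_sum A' zr j]
    refine Finset.sum_congr rfl fun i _ => ?_
    simp [hzr, hA']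
  have him : ∀ j, (Bc A z j).im = A' zi j := by
    intro j
    rw [Bc_apply, Complex.im_sum, clm_apply_eq_sum A' zi j]
    refine Finset.sum_congr rfl fun i _ => ?_
    simp [hzi, hA']
  have hsq : ‖Bc A z‖ ^ 2 ≤ (‖A‖ * ‖z‖) ^ 2 := by
    rw [eucl_norm_sq_c]
    have h1 : ∑ j, ((Bc A z j).re ^ 2 + (Bc A z j).im ^ 2)
        = ‖A' zr‖ ^ 2 + ‖A' zi‖ ^ 2 := by
      rw [eucl_norm_sq_r, eucl_norm_sq_r, ← Finset.sum_add_distrib]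
      refine Finset.sum_congr rfl fun j _ => by rw [hre j, him j]
    rw [h1]
    have h2 : ‖A' zr‖ ≤ ‖A‖ * ‖zr‖ := by rw [← hnA']; exact A'.le_opNorm zr
    have h3 : ‖A' zi‖ ≤ ‖A‖ * ‖zi‖ := by rw [← hnA']; exact A'.le_opNorm zi
    have h4 : ‖zr‖ ^ 2 + ‖zi‖ ^ 2 = ‖z‖ ^ 2 := by
      rw [eucl_norm_sq_r, eucl_norm_sq_r, eucl_norm_sq_c, ← Finset.sum_add_distrib]
    have h5 : ‖A' zr‖ ^ 2 ≤ (‖A‖ * ‖zr‖) ^ 2 := pow_le_pow_left₀ (norm_nonneg _) h2 2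
    have h6 : ‖A' zi‖ ^ 2 ≤ (‖A‖ * ‖zi‖) ^ 2 := pow_le_pow_left₀ (norm_nonneg _) h3 2
    have h7 : (‖A‖ * ‖zr‖) ^ 2 + (‖A‖ * ‖zi‖) ^ 2 = (‖A‖ * ‖z‖) ^ 2 := by
      rw [mul_pow, mul_pow, mul_pow, ← h4]; ring
    linarith
  have h0 : (0:ℝ) ≤ ‖A‖ * ‖z‖ := by positivity
  calc ‖Bc A z‖ = Real.sqrt (‖Bc A z‖ ^ 2) := (Real.sqrt_sq (norm_nonneg _)).symm
    _ ≤ Real.sqrt ((‖A‖ * ‖z‖) ^ 2) := Real.sqrt_le_sqrt hsq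
    _ = ‖A‖ * ‖z‖ := Real.sqrt_sq h0

lemma covQuad_map {d m : ℕ} (F : Measure (EuclideanSpace ℝ (Fin d))) [IsProbabilityMeasure F]
    (A : EuclideanSpace ℝ (Fin d) →L[ℝ] EuclideanSpace ℝ (Fin m))
    (y v : EuclideanSpace ℝ (Fin m)) :
    covQuad (Measure.map (fun x => A x + y) F) v = covQuad F (ContinuousLinearMap.adjoint A v) := by
  set w := ContinuousLinearMap.adjoint A v with hw
  set s : EuclideanSpace ℝ (Fin d) → ℝ := fun x => inner ℝ x w with hs
  set c : ℝ := inner ℝ y v with hc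
  have hT : Measurable fun x : EuclideanSpace ℝ (Fin d) => A x + y :=
    (A.continuous.add continuous_const).measurable
  have hscont : Continuous s := continuous_id.inner continuous_const
  have hinner : ∀ x : EuclideanSpace ℝ (Fin d), (inner ℝ (A x + y) v : ℝ) = s x + c := by
    intro x
    show (inner ℝ (A x + y) v : ℝ) = inner ℝ x w + c
    rw [hw, hc, inner_add_left, ContinuousLinearMap.adjoint_inner_right]
  have hgcont : Continuous fun x' : EuclideanSpace ℝ (Fin m) => (inner ℝ x' v : ℝ) :=
    continuous_id.inner continuous_const
  have hM' : (∫ x', (inner ℝ x' v : ℝ) ∂(Measure.map (fun x => A x + y) F))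
      = ∫ x, (s x + c) ∂F := by
    rw [integral_map hT.aemeasurable hgcont.aestronglyMeasurable]
    exact integral_congr_ae (Filter.Eventually.of_forall fun x => hinner x)
  set M' : ℝ := ∫ x', (inner ℝ x' v : ℝ) ∂(Measure.map (fun x => A x + y) F) with hM'def
  set M : ℝ := ∫ x, s x ∂F with hMdef
  have hcov1 : covQuad (Measure.map (fun x => A x + y) F) v = ∫ x, (s x + c - M') ^ 2 ∂F := by
    rw [covQuad, ← hM'def]
    rw [integral_map hT.aemeasurable (f := fun x' => (inner ℝ x' v - M') ^ 2)
      (((hgcont.sub continuous_const).pow 2).aestronglyMeasurable)]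
    refine integral_congr_ae (Filter.Eventually.of_forall fun x => ?_)
    show (inner ℝ (A x + y) v - M') ^ 2 = (s x + c - M') ^ 2
    rw [hinner x]
  have hcov2 : covQuad F w = ∫ x, (s x - M) ^ 2 ∂F := rfl
  rw [hcov1, hcov2]
  by_cases hsInt : Integrable s F
  · have : M' = M + c := by
      rw [hM', integral_add hsInt (integrable_const c), integral_const]
      simp [hMdef]
    rw [this]
    exact integral_congr_ae (Filter.Eventually.of_forall fun x => by ring)
  · have hM0 : M = 0 := by rw [hMdef, integral_undef hsInt]
    have hM'0 : M' = 0 := by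
      rw [hM', integral_undef]
      intro h
      refine hsInt ((h.sub (integrable_const c)).congr
        (Filter.Eventually.of_forall fun x => by simp))
    rw [hM0, hM'0]
    have hs2 : ¬ Integrable (fun x => s x ^ 2) F := by
      intro h
      refine hsInt (Integrable.mono' (g := fun x => 1 + s x ^ 2)
        ((integrable_const 1).add h) hscont.aestronglyMeasurable ?_)
      refine Filter.Eventually.of_forall fun x => ?_
      show ‖s x‖ ≤ 1 + s x ^ 2
      rw [Real.norm_eq_abs]
      nlinarith [sq_nonneg (|s x| - 1), sq_abs (s x), abs_nonneg (s x)]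
    have hsc2 : ¬ Integrable (fun x => (s x + c - 0) ^ 2) F := by
      intro h
      apply hs2
      refine Integrable.mono' (g := fun x => 2 * (s x + c - 0) ^ 2 + 2 * c ^ 2)
        ((h.const_mul 2).add (integrable_const _)) ?_ ?_
      · exact ((hscont.pow 2).aestronglyMeasurable)
      · refine Filter.Eventually.of_forall fun x => ?_
        show ‖s x ^ 2‖ ≤ 2 * (s x + c - 0) ^ 2 + 2 * c ^ 2
        rw [Real.norm_eq_abs, abs_of_nonneg (sq_nonneg _)]
        nlinarith [sq_nonneg (s x + 2 * c)]
    rw [integral_undef hsc2, integral_undef (by simpa using hs2)]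

lemma analyticAt_dirDeriv {d : ℕ} {φ : EuclideanSpace ℂ (Fin d) → ℂ}
    {z : EuclideanSpace ℂ (Fin d)} (h : AnalyticAt ℂ φ z) (u : EuclideanSpace ℂ (Fin d)) :
    AnalyticAt ℂ (dirDeriv φ u) z :=
  ((ContinuousLinearMap.apply ℂ ℂ u).analyticAt _).comp h.fderiv

lemma dirDeriv_comp_clm {m d : ℕ} (f : EuclideanSpace ℂ (Fin d) → ℂ)
    (B : EuclideanSpace ℂ (Fin m) →L[ℂ] EuclideanSpace ℂ (Fin d))
    (u z : EuclideanSpace ℂ (Fin m)) (hf : DifferentiableAt ℂ f (B z)) :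
    dirDeriv (fun z' => f (B z')) u z = dirDeriv f (B u) (B z) := by
  show fderiv ℂ (f ∘ B) z u = fderiv ℂ f (B z) (B u)
  rw [fderiv_comp z hf B.differentiableAt, B.fderiv]
  rfl

set_option maxHeartbeats 1000000 in
set_option synthInstance.maxHeartbeats 400000 in
/-- if `L(ξ) ∈ A_d(τ)`, `A` is linear and `y ∈ ℝ^m`, then
`L(Aξ + y) ∈ A_m(‖A‖τ)`. -/
theorem memA_map {Ω : Type*} [MeasureSpace Ω] (P : Measure Ω)
    [IsProbabilityMeasure P] {d m : ℕ} {τ : ℝ} (hτ : 0 ≤ τ)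
    (ξ : Ω → EuclideanSpace ℝ (Fin d)) (hξ : Measurable ξ)
    (A : EuclideanSpace ℝ (Fin d) →L[ℝ] EuclideanSpace ℝ (Fin m))
    (y : EuclideanSpace ℝ (Fin m))
    (hA : MemA d τ (Measure.map ξ P)) :
    MemA m (‖A‖ * τ) (Measure.map (fun ω => A (ξ ω) + y) P) := by
  obtain ⟨φ, hφ0, hφa, hφe, hφd⟩ := hA
  set F := Measure.map ξ P with hF
  haveI : IsProbabilityMeasure F := Measure.isProbabilityMeasure_map hξ.aemeasurable
  have hT : Measurable fun x : EuclideanSpace ℝ (Fin d) => A x + y :=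
    (A.continuous.add continuous_const).measurable
  have hmap : Measure.map (fun ω => A (ξ ω) + y) P = Measure.map (fun x => A x + y) F := by
    rw [hF, Measure.map_map hT hξ]
    rfl
  rw [hmap]
  set B := Bc A with hB
  set L : EuclideanSpace ℂ (Fin m) →L[ℂ] ℂ :=
    ∑ i, (y i : ℂ) • (EuclideanSpace.proj i : EuclideanSpace ℂ (Fin m) →L[ℂ] ℂ) with hL
  have hLapp : ∀ z : EuclideanSpace ℂ (Fin m), L z = ∑ i, z i * (y i : ℂ) := by
    intro z
    rw [hL]
    simp [ContinuousLinearMap.sum_apply, mul_comm]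
  have hdom : ∀ z : EuclideanSpace ℂ (Fin m), ‖z‖ * (‖A‖ * τ) < 1 → ‖B z‖ * τ < 1 := by
    intro z hz
    have h1 : ‖B z‖ * τ ≤ (‖A‖ * ‖z‖) * τ :=
      mul_le_mul_of_nonneg_right (Bc_norm_le A z) hτ
    have h2 : (‖A‖ * ‖z‖) * τ = ‖z‖ * (‖A‖ * τ) := by ring
    linarith
  refine ⟨fun z => φ (B z) + L z, ?_, ?_, ?_, ?_⟩
  · simp [hφ0]
  · intro z hz
    exact AnalyticAt.add ((hφa _ (hdom z hz)).comp (B.analyticAt z)) (L.analyticAt z)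
  · intro z hz
    rw [Complex.exp_add, hφe (B z) (hdom z hz)]
    have hc1 : Continuous fun x : EuclideanSpace ℝ (Fin m) =>
        Complex.exp (∑ i, z i * (x i : ℂ)) := by
      refine Complex.continuous_exp.comp (continuous_finset_sum _ fun i _ => ?_)
      exact continuous_const.mul
        (Complex.continuous_ofReal.comp (EuclideanSpace.proj (𝕜 := ℝ) i).continuous)
    rw [integral_map hT.aemeasurable hc1.aestronglyMeasurable, ← integral_mul_const]
    refine integral_congr_ae (Filter.Eventually.of_forall fun x => ?_)
    show Complex.exp (∑ j, B z j * (x j : ℂ)) * Complex.exp (L z)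
        = Complex.exp (∑ i, z i * (((A x + y) i : ℝ) : ℂ))
    rw [← Complex.exp_add]
    congr 1
    rw [hB, Bc_exponent A z x, hLapp z, ← Finset.sum_add_distrib]
    refine Finset.sum_congr rfl fun i _ => ?_
    have hxy : ((A x + y) i : ℝ) = A x i + y i := rfl
    rw [hxy]
    push_cast
    ring
  · intro u v z hz
    set U : Set (EuclideanSpace ℂ (Fin m)) := {z' | ‖z'‖ * (‖A‖ * τ) < 1} with hU
    have hUopen : IsOpen U := isOpen_lt (continuous_norm.mul continuous_const) continuous_const
    have hzU : z ∈ U := hz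
    set ψ : EuclideanSpace ℂ (Fin m) → ℂ := fun z' => φ (B z') + L z' with hψ
    have hφana : ∀ z' ∈ U, AnalyticAt ℂ φ (B z') := fun z' hz' => hφa _ (hdom z' hz')
    set vC := toC (ContinuousLinearMap.adjoint A v) with hvC
    set uC := toC (ContinuousLinearMap.adjoint A u) with huC
    have hBv : B (toC v) = vC := Bc_toC A v
    have hBu : B (toC u) = uC := Bc_toC A u
    have step1 : ∀ z' ∈ U, dirDeriv ψ (toC v) z' = dirDeriv φ vC (B z') + L (toC v) := by
      intro z' hz'
      have hdg : DifferentiableAt ℂ (fun w => φ (B w)) z' :=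
        (hφana z' hz').differentiableAt.comp z' B.differentiableAt
      show fderiv ℂ ψ z' (toC v) = _
      rw [hψ]
      rw [fderiv_fun_add hdg L.differentiableAt]
      rw [ContinuousLinearMap.add_apply, L.fderiv]
      have : fderiv ℂ (fun w => φ (B w)) z' (toC v) = dirDeriv φ (B (toC v)) (B z') :=
        dirDeriv_comp_clm φ B (toC v) z' (hφana z' hz').differentiableAt
      rw [this, hBv]
    have step2 : ∀ z' ∈ U, dirDeriv (dirDeriv ψ (toC v)) (toC v) z'
        = dirDeriv (dirDeriv φ vC) vC (B z') := by
      intro z' hz'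
      have hev : dirDeriv ψ (toC v) =ᶠ[nhds z'] fun w => dirDeriv φ vC (B w) + L (toC v) :=
        Filter.eventuallyEq_of_mem (hUopen.mem_nhds hz') step1
      show fderiv ℂ (dirDeriv ψ (toC v)) z' (toC v) = _
      rw [hev.fderiv_eq, fderiv_add_const]
      have : dirDeriv (fun w => dirDeriv φ vC (B w)) (toC v) z'
          = dirDeriv (dirDeriv φ vC) (B (toC v)) (B z') :=
        dirDeriv_comp_clm (dirDeriv φ vC) B (toC v) z'
          (analyticAt_dirDeriv (hφana z' hz') vC).differentiableAt
      rw [hBv] at this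
      exact this
    have step3 : dirDeriv (dirDeriv (dirDeriv ψ (toC v)) (toC v)) (toC u) z
        = dirDeriv (dirDeriv (dirDeriv φ vC) vC) uC (B z) := by
      have hev : dirDeriv (dirDeriv ψ (toC v)) (toC v)
          =ᶠ[nhds z] fun w => dirDeriv (dirDeriv φ vC) vC (B w) :=
        Filter.eventuallyEq_of_mem (hUopen.mem_nhds hzU) step2
      show fderiv ℂ (dirDeriv (dirDeriv ψ (toC v)) (toC v)) z (toC u) = _
      rw [hev.fderiv_eq]
      have : dirDeriv (fun w => dirDeriv (dirDeriv φ vC) vC (B w)) (toC u) z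
          = dirDeriv (dirDeriv (dirDeriv φ vC) vC) (B (toC u)) (B z) :=
        dirDeriv_comp_clm (dirDeriv (dirDeriv φ vC) vC) B (toC u) z
          (analyticAt_dirDeriv (analyticAt_dirDeriv (hφana z hzU) vC) vC).differentiableAt
      rw [hBu] at this
      exact this
    have hcq : 0 ≤ covQuad F (ContinuousLinearMap.adjoint A v) :=
      integral_nonneg fun x => sq_nonneg _
    have hAu : ‖ContinuousLinearMap.adjoint A u‖ ≤ ‖A‖ * ‖u‖ := by
      calc ‖ContinuousLinearMap.adjoint A u‖
          ≤ ‖ContinuousLinearMap.adjoint A‖ * ‖u‖ := (ContinuousLinearMap.adjoint A).le_opNorm u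
        _ = ‖A‖ * ‖u‖ := by rw [LinearIsometryEquiv.norm_map ContinuousLinearMap.adjoint A]
    calc ‖dirDeriv (dirDeriv (dirDeriv ψ (toC v)) (toC v)) (toC u) z‖
        = ‖dirDeriv (dirDeriv (dirDeriv φ vC) vC) uC (B z)‖ := by rw [step3]
      _ ≤ ‖ContinuousLinearMap.adjoint A u‖ * τ * covQuad F (ContinuousLinearMap.adjoint A v) := by
          rw [hvC, huC]
          exact hφd (ContinuousLinearMap.adjoint A u) (ContinuousLinearMap.adjoint A v)
            (B z) (hdom z hz)
      _ ≤ (‖A‖ * ‖u‖) * τ * covQuad F (ContinuousLinearMap.adjoint A v) :=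
          mul_le_mul_of_nonneg_right (mul_le_mul_of_nonneg_right hAu hτ) hcq
      _ = ‖u‖ * (‖A‖ * τ) * covQuad F (ContinuousLinearMap.adjoint A v) := by ring
      _ = ‖u‖ * (‖A‖ * τ) * covQuad (Measure.map (fun x => A x + y) F) v := by
          rw [covQuad_map F A y v]

end
end

section
/- Suppose τ ≥ 0 and ξ⁽¹⁾ ∈ ℝ^{d₁}, ξ⁽²⁾ ∈ ℝ^{d₂} are independent random vectors with L(ξ⁽¹⁾) ∈ A_{d₁}(τ) and L(ξ⁽²⁾) ∈ A_{d₂}(τ). Let ξ ∈ ℝ^{d₁+d₂} be the vector whose first d₁ coordinates coincide with those of ξ⁽¹⁾ and whose last d₂ coordinates coincide with those of ξ⁽²⁾. Then L(ξ) ∈ A_{d₁+d₂}(τ). -/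
open MeasureTheory

noncomputable section

/-! ### Auxiliary definitions and lemmas -/

section Aux

variable {d₁ d₂ : ℕ} {τ : ℝ}

/-- Projection onto the first block of coordinates, as a continuous linear map. -/
def cproj₁ (d₁ d₂ : ℕ) : EuclideanSpace ℂ (Fin (d₁+d₂)) →L[ℂ] EuclideanSpace ℂ (Fin d₁) :=
  LinearMap.toContinuousLinearMap
    { toFun := fun z => (WithLp.toLp 2 (fun j => z (Fin.castAdd d₂ j)) : EuclideanSpace ℂ (Fin d₁)),
      map_add' := fun _ _ => rfl, map_smul' := fun _ _ => rfl }

/-- Projection onto the second block of coordinates, as a continuous linear map. -/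
def cproj₂ (d₁ d₂ : ℕ) : EuclideanSpace ℂ (Fin (d₁+d₂)) →L[ℂ] EuclideanSpace ℂ (Fin d₂) :=
  LinearMap.toContinuousLinearMap
    { toFun := fun z => (WithLp.toLp 2 (fun j => z (Fin.natAdd d₁ j)) : EuclideanSpace ℂ (Fin d₂)),
      map_add' := fun _ _ => rfl, map_smul' := fun _ _ => rfl }

def rproj₁ (d₁ d₂ : ℕ) (v : EuclideanSpace ℝ (Fin (d₁+d₂))) : EuclideanSpace ℝ (Fin d₁) :=
  WithLp.toLp 2 (fun j => v (Fin.castAdd d₂ j))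
def rproj₂ (d₁ d₂ : ℕ) (v : EuclideanSpace ℝ (Fin (d₁+d₂))) : EuclideanSpace ℝ (Fin d₂) :=
  WithLp.toLp 2 (fun j => v (Fin.natAdd d₁ j))

lemma cproj₁_toC (v : EuclideanSpace ℝ (Fin (d₁+d₂))) :
    cproj₁ d₁ d₂ (toC v) = toC (rproj₁ d₁ d₂ v) := rfl
lemma cproj₂_toC (v : EuclideanSpace ℝ (Fin (d₁+d₂))) :
    cproj₂ d₁ d₂ (toC v) = toC (rproj₂ d₁ d₂ v) := rfl

lemma norm_toC {d : ℕ} (u : EuclideanSpace ℝ (Fin d)) : ‖toC u‖ = ‖u‖ := by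
  rw [EuclideanSpace.norm_eq, EuclideanSpace.norm_eq]
  congr 1; apply Finset.sum_congr rfl; intro i _
  simp [toC, Complex.norm_real]

lemma norm_cproj₁_le (z : EuclideanSpace ℂ (Fin (d₁+d₂))) : ‖cproj₁ d₁ d₂ z‖ ≤ ‖z‖ := by
  rw [EuclideanSpace.norm_eq, EuclideanSpace.norm_eq]
  apply Real.sqrt_le_sqrt
  rw [Fin.sum_univ_add]
  exact le_add_of_nonneg_right (by positivity)

lemma norm_cproj₂_le (z : EuclideanSpace ℂ (Fin (d₁+d₂))) : ‖cproj₂ d₁ d₂ z‖ ≤ ‖z‖ := by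
  rw [EuclideanSpace.norm_eq, EuclideanSpace.norm_eq]
  apply Real.sqrt_le_sqrt
  rw [Fin.sum_univ_add]
  exact le_add_of_nonneg_left (by positivity)

lemma norm_rproj₁_le (v : EuclideanSpace ℝ (Fin (d₁+d₂))) : ‖rproj₁ d₁ d₂ v‖ ≤ ‖v‖ := by
  rw [EuclideanSpace.norm_eq, EuclideanSpace.norm_eq]
  apply Real.sqrt_le_sqrt
  rw [Fin.sum_univ_add]
  exact le_add_of_nonneg_right (by positivity)

lemma norm_rproj₂_le (v : EuclideanSpace ℝ (Fin (d₁+d₂))) : ‖rproj₂ d₁ d₂ v‖ ≤ ‖v‖ := by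
  rw [EuclideanSpace.norm_eq, EuclideanSpace.norm_eq]
  apply Real.sqrt_le_sqrt
  rw [Fin.sum_univ_add]
  exact le_add_of_nonneg_left (by positivity)

lemma isOpen_ball' (d : ℕ) (τ : ℝ) : IsOpen {z : EuclideanSpace ℂ (Fin d) | ‖z‖ * τ < 1} :=
  isOpen_lt (continuous_norm.mul continuous_const) continuous_const

lemma analyticOnNhd_dirDeriv {d : ℕ} {f : EuclideanSpace ℂ (Fin d) → ℂ}
    {s : Set (EuclideanSpace ℂ (Fin d))} (hf : AnalyticOnNhd ℂ f s)
    (u : EuclideanSpace ℂ (Fin d)) : AnalyticOnNhd ℂ (dirDeriv f u) s := by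
  intro z hz
  exact ((ContinuousLinearMap.apply ℂ ℂ u).analyticAt _).comp (hf.fderiv z hz)

lemma eqOn_dirDeriv (hτ : 0 ≤ τ)
    {f₁ : EuclideanSpace ℂ (Fin d₁) → ℂ} {f₂ : EuclideanSpace ℂ (Fin d₂) → ℂ}
    (hf₁ : AnalyticOnNhd ℂ f₁ {w | ‖w‖ * τ < 1})
    (hf₂ : AnalyticOnNhd ℂ f₂ {w | ‖w‖ * τ < 1})
    (w : EuclideanSpace ℂ (Fin (d₁+d₂)))
    {g : EuclideanSpace ℂ (Fin (d₁+d₂)) → ℂ}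
    (hg : Set.EqOn g (fun z => f₁ (cproj₁ d₁ d₂ z) + f₂ (cproj₂ d₁ d₂ z)) {z | ‖z‖ * τ < 1}) :
    Set.EqOn (dirDeriv g w)
      (fun z => dirDeriv f₁ (cproj₁ d₁ d₂ w) (cproj₁ d₁ d₂ z)
        + dirDeriv f₂ (cproj₂ d₁ d₂ w) (cproj₂ d₁ d₂ z)) {z | ‖z‖ * τ < 1} := by
  intro z hz
  have hz₁ : ‖cproj₁ d₁ d₂ z‖ * τ < 1 :=
    lt_of_le_of_lt (mul_le_mul_of_nonneg_right (norm_cproj₁_le z) hτ) hz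
  have hz₂ : ‖cproj₂ d₁ d₂ z‖ * τ < 1 :=
    lt_of_le_of_lt (mul_le_mul_of_nonneg_right (norm_cproj₂_le z) hτ) hz
  have hd₁ : DifferentiableAt ℂ (fun z => f₁ (cproj₁ d₁ d₂ z)) z :=
    ((hf₁ _ hz₁).differentiableAt.comp z (cproj₁ d₁ d₂).differentiableAt)
  have hd₂ : DifferentiableAt ℂ (fun z => f₂ (cproj₂ d₁ d₂ z)) z :=
    ((hf₂ _ hz₂).differentiableAt.comp z (cproj₂ d₁ d₂).differentiableAt)
  have e1 : fderiv ℂ (fun z => f₁ (cproj₁ d₁ d₂ z)) z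
      = (fderiv ℂ f₁ (cproj₁ d₁ d₂ z)).comp (cproj₁ d₁ d₂ : _ →L[ℂ] _) := by
    rw [show (fun z => f₁ (cproj₁ d₁ d₂ z)) = f₁ ∘ (cproj₁ d₁ d₂) from rfl,
      fderiv_comp _ (hf₁ _ hz₁).differentiableAt (cproj₁ d₁ d₂).differentiableAt,
      (cproj₁ d₁ d₂).fderiv]
  have e2 : fderiv ℂ (fun z => f₂ (cproj₂ d₁ d₂ z)) z
      = (fderiv ℂ f₂ (cproj₂ d₁ d₂ z)).comp (cproj₂ d₁ d₂ : _ →L[ℂ] _) := by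
    rw [show (fun z => f₂ (cproj₂ d₁ d₂ z)) = f₂ ∘ (cproj₂ d₁ d₂) from rfl,
      fderiv_comp _ (hf₂ _ hz₂).differentiableAt (cproj₂ d₁ d₂).differentiableAt,
      (cproj₂ d₁ d₂).fderiv]
  have hgf : fderiv ℂ g z = fderiv ℂ (fun z => f₁ (cproj₁ d₁ d₂ z) + f₂ (cproj₂ d₁ d₂ z)) z :=
    Filter.EventuallyEq.fderiv_eq
      (hg.eventuallyEq_of_mem ((isOpen_ball' (d₁+d₂) τ).mem_nhds hz))
  show fderiv ℂ g z w = _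
  rw [hgf, fderiv_fun_add hd₁ hd₂, ContinuousLinearMap.add_apply, e1, e2]
  rfl

lemma sq_half_le_exp (a : ℝ) : a ^ 2 / 2 ≤ Real.exp a + Real.exp (-a) := by
  have key : ∀ x : ℝ, 0 ≤ x → x ^ 2 / 2 ≤ Real.exp x := by
    intro x hx
    have := Real.sum_le_exp_of_nonneg hx 3
    simp [Finset.sum_range_succ] at this
    nlinarith
  rcases le_total 0 a with h | h
  · have := key a h
    have := Real.exp_pos (-a)
    linarith
  · have h1 := key (-a) (neg_nonneg.2 h)
    have := Real.exp_pos a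
    nlinarith

lemma inner_eq_sum {d : ℕ} (x v : EuclideanSpace ℝ (Fin d)) :
    (inner ℝ x v : ℝ) = ∑ i, x i * v i := by
  rw [PiLp.inner_apply]; simp [RCLike.inner_apply]
  exact Finset.sum_congr rfl fun i _ => mul_comm _ _

/-- A distribution of class `A_d(τ)` has a finite second moment in every direction. -/
lemma memA_memℒp {d : ℕ} {τ : ℝ} (hτ : 0 ≤ τ) {F : Measure (EuclideanSpace ℝ (Fin d))}
    [IsProbabilityMeasure F] (h : MemA d τ F) (v : EuclideanSpace ℝ (Fin d)) :
    MemLp (fun x => (inner ℝ x v : ℝ)) 2 F := by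
  obtain ⟨φ, -, -, hmgf, -⟩ := h
  have hvτ : 0 ≤ ‖v‖ * τ := mul_nonneg (norm_nonneg v) hτ
  set t : ℝ := (‖v‖ * τ + 1)⁻¹ with ht_def
  have ht : 0 < t := by positivity
  have h1 : t * (‖v‖ * τ + 1) = 1 := inv_mul_cancel₀ (by positivity)
  have key : ∀ s : ℝ, |s| = t →
      Integrable (fun x => Real.exp (s * (inner ℝ x v : ℝ))) F := by
    intro s hs
    have hb : ‖toC (s • v)‖ * τ < 1 := by
      rw [norm_toC, norm_smul, Real.norm_eq_abs, hs, mul_assoc]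
      nlinarith
    have heq := hmgf (toC (s • v)) hb
    have hInt : Integrable (fun x => Complex.exp (∑ i, (toC (s • v)) i * (x i : ℂ))) F := by
      by_contra hc
      rw [integral_undef hc] at heq
      exact Complex.exp_ne_zero _ heq
    refine hInt.norm.congr (ae_of_all _ fun x => ?_)
    have hx : ∑ i, (toC (s • v)) i * (x i : ℂ) = ((s * (inner ℝ x v : ℝ) : ℝ) : ℂ) := by
      rw [inner_eq_sum]
      push_cast [Finset.mul_sum]
      apply Finset.sum_congr rfl; intro i _
      simp [toC]
      ring
    simp only [Complex.norm_exp, hx, Complex.ofReal_re]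
  have hcont : Continuous (fun x : EuclideanSpace ℝ (Fin d) => (inner ℝ x v : ℝ)) :=
    continuous_id.inner continuous_const
  have hsq : Integrable (fun x => (inner ℝ x v : ℝ) ^ 2) F := by
    have hg := ((key t (abs_of_pos ht)).add
      (key (-t) (by rw [abs_neg, abs_of_pos ht]))).const_mul (2 / t ^ 2)
    refine hg.mono' ((hcont.pow 2).aestronglyMeasurable) (ae_of_all _ fun x => ?_)
    have hb := sq_half_le_exp (t * (inner ℝ x v : ℝ))
    have hrw : (-t) * (inner ℝ x v : ℝ) = -(t * (inner ℝ x v : ℝ)) := by ring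
    simp only [Pi.add_apply, Real.norm_eq_abs, abs_of_nonneg (sq_nonneg (inner ℝ x v : ℝ))]
    rw [hrw]
    have : (inner ℝ x v : ℝ) ^ 2 = (2 / t ^ 2) * ((t * (inner ℝ x v : ℝ)) ^ 2 / 2) := by
      field_simp
    rw [this]
    apply mul_le_mul_of_nonneg_left hb (by positivity)
  exact (memLp_two_iff_integrable_sq hcont.aestronglyMeasurable).mpr hsq

lemma covQuad_nonneg {d : ℕ} (F : Measure (EuclideanSpace ℝ (Fin d)))
    (v : EuclideanSpace ℝ (Fin d)) : 0 ≤ covQuad F v :=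
  integral_nonneg fun x => sq_nonneg _

lemma variance_eq_integral' {Ω : Type*} [MeasurableSpace Ω] {P : Measure Ω}
    [IsProbabilityMeasure P] {Z : Ω → ℝ} (hZ : MemLp Z 2 P) :
    ProbabilityTheory.variance Z P = ∫ ω, (Z ω - ∫ ω', Z ω' ∂P) ^ 2 ∂P := by
  rw [ProbabilityTheory.variance_eq_integral hZ.aemeasurable]

lemma covQuad_map_s3 {Ω : Type*} [MeasurableSpace Ω] {P : Measure Ω}
    [IsProbabilityMeasure P] {d : ℕ} {f : Ω → EuclideanSpace ℝ (Fin d)}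
    (hf : Measurable f) (w : EuclideanSpace ℝ (Fin d)) :
    covQuad (Measure.map f P) w
      = ∫ ω, ((inner ℝ (f ω) w : ℝ) - ∫ ω', (inner ℝ (f ω') w : ℝ) ∂P) ^ 2 ∂P := by
  have hc : Continuous (fun x : EuclideanSpace ℝ (Fin d) => (inner ℝ x w : ℝ)) :=
    continuous_id.inner continuous_const
  have hm : (∫ y, (inner ℝ y w : ℝ) ∂(Measure.map f P)) = ∫ ω, (inner ℝ (f ω) w : ℝ) ∂P :=
    integral_map hf.aemeasurable hc.aestronglyMeasurable
  unfold covQuad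
  rw [hm]; exact integral_map hf.aemeasurable (((hc.sub continuous_const).pow 2 : Continuous fun x =>
    (inner ℝ x w - ∫ ω, inner ℝ (f ω) w ∂P) ^ 2).aestronglyMeasurable)

/-- Concatenation of two real vectors. -/
def concatV {d₁ d₂ : ℕ} (x : EuclideanSpace ℝ (Fin d₁)) (y : EuclideanSpace ℝ (Fin d₂)) :
    EuclideanSpace ℝ (Fin (d₁ + d₂)) :=
  WithLp.toLp 2 (fun i => (Fin.addCases (fun j => x j) (fun j => y j) i : ℝ))

lemma measurable_concat {Ω : Type*} [MeasurableSpace Ω]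
    {d₁ d₂ : ℕ} {ξ₁ : Ω → EuclideanSpace ℝ (Fin d₁)} {ξ₂ : Ω → EuclideanSpace ℝ (Fin d₂)}
    (hm₁ : Measurable ξ₁) (hm₂ : Measurable ξ₂) :
    Measurable (fun ω => concatV (ξ₁ ω) (ξ₂ ω)) := by
  show Measurable fun ω => WithLp.toLp 2 (fun i : Fin (d₁ + d₂) =>
    (Fin.addCases (fun j => ξ₁ ω j) (fun j => ξ₂ ω j) i : ℝ))
  apply (WithLp.measurable_toLp 2 _).comp
  apply measurable_pi_lambda
  intro i
  induction i using Fin.addCases with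
  | left j => simpa [Function.comp_def] using (measurable_pi_apply j).comp ((WithLp.measurable_ofLp 2 _).comp hm₁)
  | right j => simpa [Function.comp_def] using (measurable_pi_apply j).comp ((WithLp.measurable_ofLp 2 _).comp hm₂)

lemma inner_concat {d₁ d₂ : ℕ} (x : EuclideanSpace ℝ (Fin d₁)) (y : EuclideanSpace ℝ (Fin d₂))
    (v : EuclideanSpace ℝ (Fin (d₁ + d₂))) :
    (inner ℝ (concatV x y) v : ℝ)
      = (inner ℝ x (rproj₁ d₁ d₂ v) : ℝ) + (inner ℝ y (rproj₂ d₁ d₂ v) : ℝ) := by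
  rw [inner_eq_sum, inner_eq_sum, inner_eq_sum, Fin.sum_univ_add]
  simp [concatV, rproj₁, rproj₂]

/-- Splitting of the covariance quadratic form for the concatenation of two
independent random vectors. -/
lemma covQuad_concat {Ω : Type*} [MeasurableSpace Ω] (P : Measure Ω)
    [IsProbabilityMeasure P] {d₁ d₂ : ℕ}
    (ξ₁ : Ω → EuclideanSpace ℝ (Fin d₁)) (ξ₂ : Ω → EuclideanSpace ℝ (Fin d₂))
    (hm₁ : Measurable ξ₁) (hm₂ : Measurable ξ₂)
    (hindep : ProbabilityTheory.IndepFun ξ₁ ξ₂ P)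
    (v : EuclideanSpace ℝ (Fin (d₁ + d₂)))
    (hX1 : MemLp (fun x => (inner ℝ x (rproj₁ d₁ d₂ v) : ℝ)) 2 (Measure.map ξ₁ P))
    (hX2 : MemLp (fun x => (inner ℝ x (rproj₂ d₁ d₂ v) : ℝ)) 2 (Measure.map ξ₂ P)) :
    covQuad (Measure.map (fun ω => concatV (ξ₁ ω) (ξ₂ ω)) P) v
      = covQuad (Measure.map ξ₁ P) (rproj₁ d₁ d₂ v)
        + covQuad (Measure.map ξ₂ P) (rproj₂ d₁ d₂ v) := by
  classical
  set v₁ := rproj₁ d₁ d₂ v with hv₁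
  set v₂ := rproj₂ d₁ d₂ v with hv₂
  set X : Ω → ℝ := fun ω => (inner ℝ (ξ₁ ω) v₁ : ℝ) with hXdef
  set Y : Ω → ℝ := fun ω => (inner ℝ (ξ₂ ω) v₂ : ℝ) with hYdef
  have hc₁ : Continuous (fun x : EuclideanSpace ℝ (Fin d₁) => (inner ℝ x v₁ : ℝ)) :=
    continuous_id.inner continuous_const
  have hc₂ : Continuous (fun x : EuclideanSpace ℝ (Fin d₂) => (inner ℝ x v₂ : ℝ)) :=
    continuous_id.inner continuous_const
  have hmξ : Measurable (fun ω => concatV (ξ₁ ω) (ξ₂ ω)) := measurable_concat hm₁ hm₂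
  have hXm : MemLp X 2 P :=
    (memLp_map_measure_iff hc₁.aestronglyMeasurable hm₁.aemeasurable).mp hX1
  have hYm : MemLp Y 2 P :=
    (memLp_map_measure_iff hc₂.aestronglyMeasurable hm₂.aemeasurable).mp hX2
  have hindXY : ProbabilityTheory.IndepFun X Y P :=
    hindep.comp hc₁.measurable hc₂.measurable
  have hpt : ∀ ω, (inner ℝ (concatV (ξ₁ ω) (ξ₂ ω)) v : ℝ) = X ω + Y ω := fun ω =>
    inner_concat (ξ₁ ω) (ξ₂ ω) v
  have hL : covQuad (Measure.map (fun ω => concatV (ξ₁ ω) (ξ₂ ω)) P) v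
      = ProbabilityTheory.variance (X + Y) P := by
    rw [covQuad_map_s3 hmξ v, variance_eq_integral' (hXm.add hYm)]
    simp_rw [hpt, Pi.add_apply]
  have hR1 : covQuad (Measure.map ξ₁ P) v₁ = ProbabilityTheory.variance X P := by
    rw [covQuad_map_s3 hm₁ v₁, variance_eq_integral' hXm]
  have hR2 : covQuad (Measure.map ξ₂ P) v₂ = ProbabilityTheory.variance Y P := by
    rw [covQuad_map_s3 hm₂ v₂, variance_eq_integral' hYm]
  rw [hL, hR1, hR2, hindXY.variance_add hXm hYm]

end Aux

/-- concatenation of two independent random vectors whose laws lie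
in `A_{d₁}(τ)` and `A_{d₂}(τ)` has law in `A_{d₁+d₂}(τ)`. -/
theorem memA_concat {Ω : Type*} [MeasurableSpace Ω] (P : Measure Ω)
    [IsProbabilityMeasure P] {d₁ d₂ : ℕ} {τ : ℝ} (hτ : 0 ≤ τ)
    (ξ₁ : Ω → EuclideanSpace ℝ (Fin d₁)) (ξ₂ : Ω → EuclideanSpace ℝ (Fin d₂))
    (hm₁ : Measurable ξ₁) (hm₂ : Measurable ξ₂)
    (hindep : ProbabilityTheory.IndepFun ξ₁ ξ₂ P)
    (h₁ : MemA d₁ τ (Measure.map ξ₁ P)) (h₂ : MemA d₂ τ (Measure.map ξ₂ P)) :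
    MemA (d₁ + d₂) τ
      (Measure.map (fun ω => (WithLp.toLp 2 (fun i : Fin (d₁ + d₂) =>
        (Fin.addCases (fun j => ξ₁ ω j) (fun j => ξ₂ ω j) i : ℝ)) :
          EuclideanSpace ℝ (Fin (d₁ + d₂)))) P) := by
  classical
  have hgoal : (fun ω => (WithLp.toLp 2 (fun i : Fin (d₁ + d₂) =>
      (Fin.addCases (fun j => ξ₁ ω j) (fun j => ξ₂ ω j) i : ℝ)) :
        EuclideanSpace ℝ (Fin (d₁ + d₂)))) = fun ω => concatV (ξ₁ ω) (ξ₂ ω) := rfl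
  rw [hgoal]
  haveI hp₁ : IsProbabilityMeasure (Measure.map ξ₁ P) :=
    Measure.isProbabilityMeasure_map hm₁.aemeasurable
  haveI hp₂ : IsProbabilityMeasure (Measure.map ξ₂ P) :=
    Measure.isProbabilityMeasure_map hm₂.aemeasurable
  have hmom₁ : ∀ w, MemLp (fun x => (inner ℝ x w : ℝ)) 2 (Measure.map ξ₁ P) :=
    fun w => memA_memℒp hτ h₁ w
  have hmom₂ : ∀ w, MemLp (fun x => (inner ℝ x w : ℝ)) 2 (Measure.map ξ₂ P) :=
    fun w => memA_memℒp hτ h₂ w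
  obtain ⟨φ₁, hφ₁0, hA₁, hM₁, hD₁⟩ := h₁
  obtain ⟨φ₂, hφ₂0, hA₂, hM₂, hD₂⟩ := h₂
  have hmξ : Measurable (fun ω => concatV (ξ₁ ω) (ξ₂ ω)) := measurable_concat hm₁ hm₂
  have hball : ∀ z : EuclideanSpace ℂ (Fin (d₁ + d₂)), ‖z‖ * τ < 1 →
      ‖cproj₁ d₁ d₂ z‖ * τ < 1 ∧ ‖cproj₂ d₁ d₂ z‖ * τ < 1 := fun z hz =>
    ⟨lt_of_le_of_lt (mul_le_mul_of_nonneg_right (norm_cproj₁_le z) hτ) hz,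
     lt_of_le_of_lt (mul_le_mul_of_nonneg_right (norm_cproj₂_le z) hτ) hz⟩
  refine ⟨fun z => φ₁ (cproj₁ d₁ d₂ z) + φ₂ (cproj₂ d₁ d₂ z), ?_, ?_, ?_, ?_⟩
  · simp [map_zero, hφ₁0, hφ₂0]
  · intro z hz
    obtain ⟨hz₁, hz₂⟩ := hball z hz
    exact ((hA₁ _ hz₁).comp ((cproj₁ d₁ d₂).analyticAt z)).add
      ((hA₂ _ hz₂).comp ((cproj₂ d₁ d₂).analyticAt z))
  · intro z hz
    obtain ⟨hz₁, hz₂⟩ := hball z hz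
    have hprod : Measure.map (fun ω => (ξ₁ ω, ξ₂ ω)) P
        = (Measure.map ξ₁ P).prod (Measure.map ξ₂ P) :=
      (ProbabilityTheory.indepFun_iff_map_prod_eq_prod_map_map hm₁.aemeasurable
        hm₂.aemeasurable).mp hindep
    have hsplit : ∀ (x : EuclideanSpace ℝ (Fin d₁)) (y : EuclideanSpace ℝ (Fin d₂)),
        (∑ i, z i * ((concatV x y) i : ℂ))
          = (∑ j, cproj₁ d₁ d₂ z j * (x j : ℂ)) + (∑ j, cproj₂ d₁ d₂ z j * (y j : ℂ)) := by
      intro x y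
      rw [Fin.sum_univ_add]
      simp [concatV, cproj₁, cproj₂, LinearMap.coe_toContinuousLinearMap']
      rfl
    have hpairm : Measurable (fun ω => (ξ₁ ω, ξ₂ ω)) := hm₁.prodMk hm₂
    have hcont : Continuous (fun x : EuclideanSpace ℝ (Fin (d₁ + d₂)) =>
        Complex.exp (∑ i, z i * (x i : ℂ))) := by fun_prop
    calc Complex.exp (φ₁ (cproj₁ d₁ d₂ z) + φ₂ (cproj₂ d₁ d₂ z))
        = (∫ x, Complex.exp (∑ j, cproj₁ d₁ d₂ z j * (x j : ℂ)) ∂(Measure.map ξ₁ P))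
          * (∫ y, Complex.exp (∑ j, cproj₂ d₁ d₂ z j * (y j : ℂ)) ∂(Measure.map ξ₂ P)) := by
          rw [Complex.exp_add, hM₁ _ hz₁, hM₂ _ hz₂]
      _ = ∫ p, Complex.exp (∑ j, cproj₁ d₁ d₂ z j * (p.1 j : ℂ))
            * Complex.exp (∑ j, cproj₂ d₁ d₂ z j * (p.2 j : ℂ))
            ∂((Measure.map ξ₁ P).prod (Measure.map ξ₂ P)) := (integral_prod_mul _ _).symm
      _ = ∫ ω, Complex.exp (∑ j, cproj₁ d₁ d₂ z j * (ξ₁ ω j : ℂ))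
            * Complex.exp (∑ j, cproj₂ d₁ d₂ z j * (ξ₂ ω j : ℂ)) ∂P := by
          rw [← hprod, integral_map hpairm.aemeasurable]
          exact Continuous.aestronglyMeasurable (by fun_prop)
      _ = ∫ ω, Complex.exp (∑ i, z i * ((concatV (ξ₁ ω) (ξ₂ ω)) i : ℂ)) ∂P := by
          refine integral_congr_ae (ae_of_all _ fun ω => ?_)
          simp only [hsplit (ξ₁ ω) (ξ₂ ω), Complex.exp_add]
      _ = ∫ x, Complex.exp (∑ i, z i * (x i : ℂ))
            ∂(Measure.map (fun ω => concatV (ξ₁ ω) (ξ₂ ω)) P) :=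
          (integral_map hmξ.aemeasurable hcont.aestronglyMeasurable).symm
  · intro u v z hz
    obtain ⟨hz₁, hz₂⟩ := hball z hz
    have hA₁' : AnalyticOnNhd ℂ φ₁ {w | ‖w‖ * τ < 1} := fun w hw => hA₁ w hw
    have hA₂' : AnalyticOnNhd ℂ φ₂ {w | ‖w‖ * τ < 1} := fun w hw => hA₂ w hw
    have h0 : Set.EqOn (fun z => φ₁ (cproj₁ d₁ d₂ z) + φ₂ (cproj₂ d₁ d₂ z))
        (fun z => φ₁ (cproj₁ d₁ d₂ z) + φ₂ (cproj₂ d₁ d₂ z))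
        {z : EuclideanSpace ℂ (Fin (d₁ + d₂)) | ‖z‖ * τ < 1} := fun _ _ => rfl
    have h1 := eqOn_dirDeriv hτ hA₁' hA₂' (toC v) h0
    have h2 := eqOn_dirDeriv hτ (analyticOnNhd_dirDeriv hA₁' _)
      (analyticOnNhd_dirDeriv hA₂' _) (toC v) h1
    have h3 := eqOn_dirDeriv hτ
      (analyticOnNhd_dirDeriv (analyticOnNhd_dirDeriv hA₁' _) _)
      (analyticOnNhd_dirDeriv (analyticOnNhd_dirDeriv hA₂' _) _) (toC u) h2
    have h3z := h3 hz
    rw [h3z, cproj₁_toC, cproj₂_toC, cproj₁_toC, cproj₂_toC]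
    have b1 := hD₁ (rproj₁ d₁ d₂ u) (rproj₁ d₁ d₂ v) (cproj₁ d₁ d₂ z) hz₁
    have b2 := hD₂ (rproj₂ d₁ d₂ u) (rproj₂ d₁ d₂ v) (cproj₂ d₁ d₂ z) hz₂
    calc ‖dirDeriv (dirDeriv (dirDeriv φ₁ (toC (rproj₁ d₁ d₂ v)))
            (toC (rproj₁ d₁ d₂ v))) (toC (rproj₁ d₁ d₂ u)) (cproj₁ d₁ d₂ z)
          + dirDeriv (dirDeriv (dirDeriv φ₂ (toC (rproj₂ d₁ d₂ v)))
            (toC (rproj₂ d₁ d₂ v))) (toC (rproj₂ d₁ d₂ u)) (cproj₂ d₁ d₂ z)‖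
        ≤ ‖dirDeriv (dirDeriv (dirDeriv φ₁ (toC (rproj₁ d₁ d₂ v)))
            (toC (rproj₁ d₁ d₂ v))) (toC (rproj₁ d₁ d₂ u)) (cproj₁ d₁ d₂ z)‖
          + ‖dirDeriv (dirDeriv (dirDeriv φ₂ (toC (rproj₂ d₁ d₂ v)))
            (toC (rproj₂ d₁ d₂ v))) (toC (rproj₂ d₁ d₂ u)) (cproj₂ d₁ d₂ z)‖ :=
          norm_add_le _ _
      _ ≤ ‖rproj₁ d₁ d₂ u‖ * τ * covQuad (Measure.map ξ₁ P) (rproj₁ d₁ d₂ v)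
          + ‖rproj₂ d₁ d₂ u‖ * τ * covQuad (Measure.map ξ₂ P) (rproj₂ d₁ d₂ v) :=
          add_le_add b1 b2
      _ ≤ ‖u‖ * τ * covQuad (Measure.map ξ₁ P) (rproj₁ d₁ d₂ v)
          + ‖u‖ * τ * covQuad (Measure.map ξ₂ P) (rproj₂ d₁ d₂ v) :=
          add_le_add
            (mul_le_mul_of_nonneg_right
              (mul_le_mul_of_nonneg_right (norm_rproj₁_le u) hτ) (covQuad_nonneg _ _))
            (mul_le_mul_of_nonneg_right
              (mul_le_mul_of_nonneg_right (norm_rproj₂_le u) hτ) (covQuad_nonneg _ _))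
      _ = ‖u‖ * τ * (covQuad (Measure.map ξ₁ P) (rproj₁ d₁ d₂ v)
          + covQuad (Measure.map ξ₂ P) (rproj₂ d₁ d₂ v)) := by ring
      _ = ‖u‖ * τ * covQuad (Measure.map (fun ω => concatV (ξ₁ ω) (ξ₂ ω)) P) v := by
          rw [covQuad_concat P ξ₁ ξ₂ hm₁ hm₂ hindep v (hmom₁ _) (hmom₂ _)]

end
end
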